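/- Downgrading bindings preserves analysability: let e be any unit expression and τ, τ' environments such that for every variable v, either τ'(v) = τ(v) or τ'(v) = Noname. If 𝒩ℰ⟦e⟧τ is defined, then 𝒩ℰ⟦e⟧τ' is also defined and equals either 𝒩ℰ⟦e⟧τ or Noname. -/
import Mathlib


/-- A named quantity: either `Named n` for a name (string) `n`, or `Noname`. -/
inductive NamedQ where
  | Named : String → NamedQ
  | Noname : NamedQ
deriving DecidableEq

/-- The partial operation ◇ on named quantities, modelled via `Option`:
`none` means undefined. -/
def diamond : NamedQ → NamedQ → Option NamedQ
  | .Named n₁, .Named n₂ => if n₁ = n₂ then some (.Named n₁) else none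
  | .Named n, .Noname => some (.Named n)
  | .Noname, .Named n => some (.Named n)
  | .Noname, .Noname => some .Noname

/-- The total operation △ on named quantities: always returns `Noname`. -/
def triangle : NamedQ → NamedQ → NamedQ := fun _ _ => .Noname

/-- Unit expressions over a type `V` of variables: a variable, a sum, a scalar
multiple by a real constant, or a product. -/
inductive UExp (V : Type) where
  | var : V → UExp V
  | add : UExp V → UExp V → UExp V
  | smul : ℝ → UExp V → UExp V
  | mul : UExp V → UExp V → UExp V

/-- A unit expression is multiplication-free if it contains no product. -/
def UExp.mulFree {V : Type} : UExp V → Prop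
  | .var _ => True
  | .add e₁ e₂ => e₁.mulFree ∧ e₂.mulFree
  | .smul _ e => e.mulFree
  | .mul _ _ => False

/-- The list of variables occurring in a unit expression. -/
def UExp.vars {V : Type} : UExp V → List V
  | .var v => [v]
  | .add e₁ e₂ => e₁.vars ++ e₂.vars
  | .smul _ e => e.vars
  | .mul e₁ e₂ => e₁.vars ++ e₂.vars

/-- The partial analysis function 𝒩ℰ: given an environment `τ` binding
variables to named quantities, compute the named quantity of a unit
expression (`none` = undefined). -/
def NE {V : Type} (τ : V → NamedQ) : UExp V → Option NamedQ
  | .var v => some (τ v)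
  | .add e₁ e₂ => do
      let q₁ ← NE τ e₁
      let q₂ ← NE τ e₂
      diamond q₁ q₂
  | .smul _ e => NE τ e
  | .mul e₁ e₂ => do
      let q₁ ← NE τ e₁
      let q₂ ← NE τ e₂
      pure (triangle q₁ q₂)

lemma diamond_downgrade (q₁ q₂ q₁' q₂' : NamedQ)
    (h₁ : q₁' = q₁ ∨ q₁' = .Noname) (h₂ : q₂' = q₂ ∨ q₂' = .Noname)
    (hd : (diamond q₁ q₂).isSome) :
    (diamond q₁' q₂').isSome ∧
      (diamond q₁' q₂' = diamond q₁ q₂ ∨ diamond q₁' q₂' = some .Noname) := by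
  cases q₁ <;> cases q₂ <;>
    rcases h₁ with rfl | rfl <;> rcases h₂ with rfl | rfl <;>
    simp_all [diamond]

/-- downgrading bindings preserves analysability: if every
variable's binding under `τ'` is either its binding under `τ` or `Noname`,
and `𝒩ℰ⟦e⟧τ` is defined, then `𝒩ℰ⟦e⟧τ'` is defined and equals either
`𝒩ℰ⟦e⟧τ` or `Noname`. -/
theorem ne_downgrade {V : Type} (e : UExp V) (τ τ' : V → NamedQ)
    (h : ∀ v, τ' v = τ v ∨ τ' v = .Noname)
    (hdef : (NE τ e).isSome) :
    (NE τ' e).isSome ∧ (NE τ' e = NE τ e ∨ NE τ' e = some .Noname) := by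
  induction e with
  | var v =>
      rcases h v with hv | hv <;> simp [NE, hv]
  | add e₁ e₂ ih₁ ih₂ =>
      simp only [NE] at hdef ⊢
      cases h1 : NE τ e₁ with
      | none => simp [h1] at hdef
      | some q₁ =>
        cases h2 : NE τ e₂ with
        | none => simp [h1, h2] at hdef
        | some q₂ =>
          simp only [h1, h2, Option.bind_some] at hdef
          obtain ⟨hs1, hv1⟩ := ih₁ (by simp [h1])
          obtain ⟨hs2, hv2⟩ := ih₂ (by simp [h2])
          obtain ⟨q₁', hq1⟩ := Option.isSome_iff_exists.mp hs1
          obtain ⟨q₂', hq2⟩ := Option.isSome_iff_exists.mp hs2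
          rw [h1] at hv1; rw [h2] at hv2
          rw [hq1] at hv1; rw [hq2] at hv2
          simp only [Option.some_inj] at hv1 hv2
          have := diamond_downgrade q₁ q₂ q₁' q₂' hv1 hv2 hdef
          simp [hq1, hq2, h1, h2, this.1, this.2]
  | smul r e ih => simpa [NE] using ih hdef
  | mul e₁ e₂ ih₁ ih₂ =>
      simp only [NE] at hdef ⊢
      cases h1 : NE τ e₁ with
      | none => simp [h1] at hdef
      | some q₁ =>
        cases h2 : NE τ e₂ with
        | none => simp [h1, h2] at hdef
        | some q₂ =>
          obtain ⟨hs1, _⟩ := ih₁ (by simp [h1])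
          obtain ⟨hs2, _⟩ := ih₂ (by simp [h2])
          obtain ⟨q₁', hq1⟩ := Option.isSome_iff_exists.mp hs1
          obtain ⟨q₂', hq2⟩ := Option.isSome_iff_exists.mp hs2
          simp [hq1, hq2, h1, h2, triangle]
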